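/- (Conjugacy of admissible embeddings detects norms.) Let λ, λ' ∈ E× be such that V_{E,λ} and V_{E,λ'} are both isomorphic to V as hermitian spaces, with isometries r : V_{E,λ} → V and r′ : V_{E,λ'} → V. Define embeddings i, i′ : K_E¹ → U(V) by i(x) = r ∘ M_x ∘ r⁻¹ and i′(x) = r′ ∘ M_x ∘ (r′)⁻¹. Then there exists h ∈ U(V) with h ∘ i(x) ∘ h⁻¹ = i′(x) for all x ∈ K_E¹ if and only if λ⁻¹λ' ∈ N_{K_E/E}(K_E×). -/

import Mathlib

/-!
Put `g = r'⁻¹ ∘ h ∘ r`, a `K`-linear automorphism of `K_E`. The norm-one elements generate `K_E`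
as a `K`-algebra: for a unit `t ∈ K` with `conj t = -t`, every `t ⊗ e` is skew, and a skew `m` is
recovered from its Cayley transform `w = (c - m)(c + m)⁻¹`, which has norm one and satisfies
`(c + m)(1 + w) = 2c` (take `c ∈ F` outside the finite spectrum of `m`; `F` is infinite). So `h`
conjugates `i` to `i'` iff `g` commutes with all multiplications, i.e. `g = M_y` for a unit `y`,
and `M_y` is an isometry `V_{E,λ} → V_{E,λ'}` iff `λ = λ' y σ(y)`, by nondegeneracy of the trace
form of the étale algebra `E`.
-/

open scoped TensorProduct

/-- The norm map `x ↦ x · conj x` on units of an algebra with involution. -/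
def normMap {F A : Type} [Field F] [CommRing A] [Algebra F A]
    (σ : A →ₐ[F] A) : Aˣ →* Aˣ :=
  (MonoidHom.id Aˣ) * (Units.map σ.toRingHom.toMonoidHom)

/-- The norm-one group `A¹ = {x ∈ A× : x · σ x = 1}`. -/
def normOneGroup {F A : Type} [Field F] [CommRing A] [Algebra F A]
    (σ : A →ₐ[F] A) : Subgroup Aˣ :=
  (normMap σ).ker

/-- The involution `σ = conj ⊗ id` on `K_E = K ⊗[F] E`. -/
noncomputable def tensorConj {F K E : Type} [Field F] [CommRing K] [Algebra F K]
    [CommRing E] [Algebra F E] (conj : K →ₐ[F] K) :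
    (K ⊗[F] E) →ₐ[F] (K ⊗[F] E) :=
  Algebra.TensorProduct.map conj (AlgHom.id F E)

/-- The hermitian form `⟨x,y⟩_μ = Tr_{K_E/K}(μ · x · σ(y))` on `K_E`. -/
noncomputable def hermFormOf {F K E : Type} [Field F] [CommRing K] [Algebra F K]
    [CommRing E] [Algebra F E] (conj : K →ₐ[F] K) (μ x y : K ⊗[F] E) : K :=
  Algebra.trace K (K ⊗[F] E) (μ * x * (tensorConj conj y))

section FiniteDimensionalAlgebra

variable {F A : Type*} [Field F] [CommRing A] [Algebra F A] [FiniteDimensional F A]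

variable (F) in
theorem spectrum.finite_of_finiteDimensional (a : A) : (spectrum F a).Finite :=
  (Module.End.finite_spectrum (Algebra.lmul F A a)).subset fun c hc hu => hc <| by
    rw [spectrum.mem_resolventSet_iff] at hu ⊢
    rwa [← Algebra.lmul_isUnit_iff (R := F), map_sub, AlgHom.commutes]

theorem exists_ne_zero_notMem_spectrum [Infinite F] (a : A) :
    ∃ c : F, c ≠ 0 ∧ c ∉ spectrum F a := by
  obtain ⟨c, hc⟩ := ((spectrum.finite_of_finiteDimensional F a).insert 0).infinite_compl.nonempty
  exact ⟨c, by simpa [not_or] using hc⟩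

theorem Subalgebra.isUnit_of_isUnit_coe (W : Subalgebra F A) {x : W} (hx : IsUnit (x : A)) :
    IsUnit x := by
  have hinj : Function.Injective (Algebra.lmul F W x) := fun y z h =>
    Subtype.ext (hx.mul_left_cancel (congrArg Subtype.val h))
  exact IsUnit.isUnit_iff_mulLeft_bijective.mpr ⟨hinj, LinearMap.injective_iff_surjective.mp hinj⟩

end FiniteDimensionalAlgebra

section NormOne

variable {F A : Type} [Field F] [CommRing A] [Algebra F A] (σ : A →ₐ[F] A)

theorem coe_normMap (x : Aˣ) : (normMap σ x : A) = x * σ x := rfl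

theorem mul_normMap_mul_normMap_inv (a : A) (y : Aˣ) :
    a * ((y : A) * σ y) * ((y⁻¹ : Aˣ) * σ (y⁻¹ : Aˣ)) = a := by
  rw [mul_assoc, ← coe_normMap, ← coe_normMap, ← Units.val_mul, ← map_mul, mul_inv_cancel,
    map_one, Units.val_one, mul_one]

theorem Subalgebra.mem_of_map_eq_neg [FiniteDimensional F A] [Infinite F] (hchar : (2 : F) ≠ 0)
    {W : Subalgebra F A} (hW : ∀ x ∈ normOneGroup σ, (x : A) ∈ W) {m : A} (hm : σ m = -m) :
    m ∈ W := by
  obtain ⟨c, hc0, hcm⟩ := exists_ne_zero_notMem_spectrum (F := F) m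
  set u : Aˣ := (spectrum.notMem_iff.mp hcm).unit
  have hu : (u : A) = algebraMap F A c - m := IsUnit.unit_spec _
  set u' : Aˣ := Units.map (σ : A →* A) u
  have hu' : (u' : A) = algebraMap F A c + m := by simp [u', hu, hm, sub_eq_add_neg]
  have hσu' : Units.map (σ : A →* A) u' = u := by ext; simp [u', hu, hm, sub_eq_add_neg]
  -- the Cayley transform of `m`
  set w : Aˣ := u * u'⁻¹
  have hw : w ∈ normOneGroup σ := by
    show w * Units.map (σ : A →* A) w = 1
    rw [map_mul, map_inv, hσu']
    change u * u'⁻¹ * (u' * u⁻¹) = 1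
    group
  have hsum : (u' : A) * (1 + w) = algebraMap F A (2 * c) := by
    rw [mul_add, mul_one, Units.val_mul, mul_left_comm, Units.mul_inv, mul_one, hu, hu',
      map_mul, map_ofNat]
    ring
  have h1w : IsUnit (1 + (w : A)) := by
    refine isUnit_of_mul_isUnit_right (x := (u' : A)) ?_
    rw [hsum]
    exact (isUnit_iff_ne_zero.mpr (mul_ne_zero hchar hc0)).map _
  obtain ⟨v, hv⟩ :=
    (W.isUnit_of_isUnit_coe (x := ⟨1 + w, add_mem W.one_mem (hW w hw)⟩) h1w).exists_right_inv
  have hu'W : (u' : A) ∈ W := by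
    have : (u' : A) = algebraMap F A (2 * c) * v := by
      rw [← hsum, mul_assoc, show (1 + (w : A)) * v = 1 from congrArg Subtype.val hv, mul_one]
    rw [this]
    exact W.mul_mem (W.algebraMap_mem _) v.2
  have : m = u' - algebraMap F A c := by rw [hu']; ring
  rw [this]
  exact W.sub_mem hu'W (W.algebraMap_mem c)

end NormOne

theorem exists_isUnit_conj_eq_neg {F K : Type*} [Field F] [CommRing K] [Algebra F K]
    (hK2 : Module.finrank F K = 2)
    (hKet : ∀ x : K, x ≠ 0 → ∃ y : K, Algebra.trace F K (x * y) ≠ 0)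
    (conj : K →ₐ[F] K) (hconj : ∀ x, conj (conj x) = x)
    (hfix : ∀ x : K, conj x = x ↔ ∃ a : F, algebraMap F K a = x) :
    ∃ t : K, IsUnit t ∧ conj t = -t := by
  have : Nontrivial K := Module.nontrivial_of_finrank_eq_succ hK2
  obtain ⟨x, hx⟩ : ∃ x : K, conj x ≠ x := by
    by_contra! hall
    have hbij : Function.Bijective (algebraMap F K) :=
      ⟨FaithfulSMul.algebraMap_injective F K, fun x => (hfix x).mp (hall x)⟩
    have := Module.finrank_of_bijective_algebraMap hbij
    omega
  set t := x - conj x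
  have ht : conj t = -t := by simp [t, hconj]
  have ht0 : t ≠ 0 := sub_ne_zero.mpr hx.symm
  obtain ⟨a, ha⟩ := (hfix (t * t)).mp (by rw [map_mul, ht, neg_mul_neg])
  have ha0 : a ≠ 0 := by
    rintro rfl
    obtain ⟨y, hy⟩ := hKet t ht0
    have hnil : IsNilpotent (t * y) := ⟨2, by rw [mul_pow, sq, ← ha, map_zero, zero_mul]⟩
    exact hy (Algebra.isNilpotent_trace_of_isNilpotent hnil).eq_zero
  refine ⟨t, IsUnit.of_mul_eq_one (a⁻¹ • t) ?_, ht⟩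
  rw [mul_smul_comm, ← ha, Algebra.smul_def, ← map_mul, inv_mul_cancel₀ ha0, map_one]

theorem Algebra.trace_one_tmul {R S A : Type*} [CommRing R] [CommRing S] [Algebra R S]
    [CommRing A] [Algebra R A] [Module.Free R A] [Module.Finite R A] (a : A) :
    Algebra.trace S (S ⊗[R] A) (1 ⊗ₜ a) = algebraMap R S (Algebra.trace R A a) := by
  have : Algebra.lmul S (S ⊗[R] A) (1 ⊗ₜ a) = (Algebra.lmul R A a).baseChange S := by
    ext z
    simp
  rw [Algebra.trace_apply, this, LinearMap.trace_baseChange, ← Algebra.trace_apply]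

theorem Algebra.TensorProduct.eq_zero_of_forall_trace_mul_eq_zero {F K E : Type*} [Field F]
    [CommRing K] [Algebra F K] [CommRing E] [Algebra F E] [Module.Finite F E]
    (hE : (Algebra.traceForm F E).Nondegenerate) {d : K ⊗[F] E}
    (hd : ∀ w, Algebra.trace K (K ⊗[F] E) (d * w) = 0) : d = 0 := by
  classical
  let b := Module.finBasis F E
  let b' := (Algebra.traceForm F E).dualBasis hE b
  let bK := Algebra.TensorProduct.basis K b
  refine bK.ext_elem fun j => ?_
  rw [map_zero, Finsupp.zero_apply, ← hd (1 ⊗ₜ b' j)]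
  conv_rhs => rw [← bK.sum_repr d]
  simp [bK, Finset.sum_mul, Algebra.TensorProduct.tmul_mul_tmul, Algebra.trace_one_tmul,
    mul_comm (b _), ← Algebra.traceForm_apply, b', LinearMap.BilinForm.apply_dualBasis_left]

section Transport

variable {R M N : Type*} [Semiring R] [AddCommMonoid M] [Module R M] [AddCommMonoid N] [Module R N]

theorem LinearEquiv.conj_conj_eq_conj_iff (h : N ≃ₗ[R] N) (r r' : M ≃ₗ[R] N)
    (f : Module.End R M) :
    h.toLinearMap ∘ₗ (r.toLinearMap ∘ₗ f ∘ₗ r.symm.toLinearMap) ∘ₗ h.symm.toLinearMap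
        = r'.toLinearMap ∘ₗ f ∘ₗ r'.symm.toLinearMap ↔
      ((r.trans h).trans r'.symm).toLinearMap ∘ₗ f
        = f ∘ₗ ((r.trans h).trans r'.symm).toLinearMap := by
  constructor <;> intro hf <;> refine LinearMap.ext fun v => ?_
  · simpa using congrArg r'.symm (LinearMap.congr_fun hf (h (r v)))
  · simpa using congrArg r' (LinearMap.congr_fun hf (r.symm (h.symm v)))

theorem LinearEquiv.exists_isometry_conj_iff {X ι : Type*} (B : N → N → X) (β β' : M → M → X)
    (r r' : M ≃ₗ[R] N) (hr : ∀ x y, B (r x) (r y) = β x y)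
    (hr' : ∀ x y, B (r' x) (r' y) = β' x y) (P : ι → Prop) (f : ι → Module.End R M) :
    (∃ h : N ≃ₗ[R] N, (∀ u v, B (h u) (h v) = B u v) ∧ ∀ i, P i →
        h.toLinearMap ∘ₗ (r.toLinearMap ∘ₗ f i ∘ₗ r.symm.toLinearMap) ∘ₗ h.symm.toLinearMap
          = r'.toLinearMap ∘ₗ f i ∘ₗ r'.symm.toLinearMap) ↔
      ∃ g : M ≃ₗ[R] M, (∀ x y, β' (g x) (g y) = β x y) ∧
        ∀ i, P i → g.toLinearMap ∘ₗ f i = f i ∘ₗ g.toLinearMap := by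
  simp only [LinearEquiv.conj_conj_eq_conj_iff]
  constructor
  · rintro ⟨h, hB, hf⟩
    refine ⟨(r.trans h).trans r'.symm, fun x y => ?_, hf⟩
    simp [← hr', hB, hr]
  · rintro ⟨g, hg, hf⟩
    have hgh : (r.trans ((r.symm.trans g).trans r')).trans r'.symm = g := by ext; simp
    refine ⟨(r.symm.trans g).trans r', fun u v => ?_, by rwa [hgh]⟩
    simp [hr', hg, ← hr]

end Transport

section TensorConj

variable {F K E : Type} [Field F] [CommRing K] [Algebra F K] [CommRing E] [Algebra F E]

@[simp]
theorem tensorConj_tmul (conj : K →ₐ[F] K) (k : K) (e : E) :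
    tensorConj conj (k ⊗ₜ[F] e) = conj k ⊗ₜ e :=
  rfl

theorem hermFormOf_mul_mul (conj : K →ₐ[F] K) (μ z x y : K ⊗[F] E) :
    hermFormOf conj μ (z * x) (z * y) = hermFormOf conj (μ * (z * tensorConj conj z)) x y := by
  simp only [hermFormOf, map_mul]
  ring_nf

theorem eq_of_forall_hermFormOf_one_eq [Module.Finite F E]
    (hEet : ∀ x : E, x ≠ 0 → ∃ y : E, Algebra.trace F E (x * y) ≠ 0)
    (conj : K →ₐ[F] K) {μ ν : K ⊗[F] E}
    (h : ∀ x, hermFormOf conj μ x 1 = hermFormOf conj ν x 1) : μ = ν := by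
  have hsep (x : E) (hx : ∀ y, Algebra.trace F E (x * y) = 0) : x = 0 := by
    by_contra hx0
    obtain ⟨y, hy⟩ := hEet x hx0
    exact hy (hx y)
  have hE : (Algebra.traceForm F E).Nondegenerate :=
    ⟨fun x hx => hsep x hx, fun y hy => hsep y fun x => by simpa [mul_comm] using hy x⟩
  refine sub_eq_zero.mp (Algebra.TensorProduct.eq_zero_of_forall_trace_mul_eq_zero hE fun x => ?_)
  have := h x
  simp only [hermFormOf, map_one, mul_one] at this
  rw [sub_mul, map_sub, this, sub_self]

theorem Subalgebra.eq_top_of_forall_normOneGroup_mem [Infinite F] [Module.Finite F E]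
    (hchar : (2 : F) ≠ 0) (hK2 : Module.finrank F K = 2)
    (hKet : ∀ x : K, x ≠ 0 → ∃ y : K, Algebra.trace F K (x * y) ≠ 0)
    (conj : K →ₐ[F] K) (hconj : ∀ x, conj (conj x) = x)
    (hfix : ∀ x : K, conj x = x ↔ ∃ a : F, algebraMap F K a = x)
    (W : Subalgebra K (K ⊗[F] E))
    (hW : ∀ x : (K ⊗[F] E)ˣ, x ∈ normOneGroup (tensorConj conj) → (x : K ⊗[F] E) ∈ W) :
    W = ⊤ := by
  have : Module.Finite F K := Module.finite_of_finrank_eq_succ hK2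
  obtain ⟨t, ht, htc⟩ := exists_isUnit_conj_eq_neg hK2 hKet conj hconj hfix
  have hskew (e : E) : t ⊗ₜ[F] e ∈ W :=
    Subalgebra.mem_of_map_eq_neg (tensorConj conj) hchar (W := W.restrictScalars F) hW
      (by rw [tensorConj_tmul, htc, TensorProduct.neg_tmul])
  rw [eq_top_iff]
  rintro z -
  induction z using TensorProduct.induction_on with
  | zero => exact W.zero_mem
  | tmul k e =>
    have hk : k ⊗ₜ[F] e = (k * ↑ht.unit⁻¹) • (t ⊗ₜ[F] e) := by
      rw [TensorProduct.smul_tmul', smul_eq_mul, mul_assoc, ht.val_inv_mul, mul_one]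
    exact hk ▸ W.smul_mem (hskew e) _
  | add x y hx hy => exact W.add_mem hx hy

theorem LinearMap.eq_lmul_of_commute_normOneGroup [Infinite F] [Module.Finite F E]
    (hchar : (2 : F) ≠ 0) (hK2 : Module.finrank F K = 2)
    (hKet : ∀ x : K, x ≠ 0 → ∃ y : K, Algebra.trace F K (x * y) ≠ 0)
    (conj : K →ₐ[F] K) (hconj : ∀ x, conj (conj x) = x)
    (hfix : ∀ x : K, conj x = x ↔ ∃ a : F, algebraMap F K a = x)
    (g : Module.End K (K ⊗[F] E))
    (hg : ∀ x : (K ⊗[F] E)ˣ, x ∈ normOneGroup (tensorConj conj) →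
      g ∘ₗ Algebra.lmul K (K ⊗[F] E) x = Algebra.lmul K (K ⊗[F] E) x ∘ₗ g) :
    g = Algebra.lmul K (K ⊗[F] E) (g 1) := by
  have htop := Subalgebra.eq_top_of_forall_normOneGroup_mem hchar hK2 hKet conj hconj hfix
    ((Subalgebra.centralizer K {g}).comap (Algebra.lmul K (K ⊗[F] E)))
    fun x hx => by simpa [Subalgebra.mem_centralizer_iff, Module.End.mul_eq_comp] using hg x hx
  refine LinearMap.ext fun v => ?_
  have hv : g * Algebra.lmul K (K ⊗[F] E) v = Algebra.lmul K (K ⊗[F] E) v * g := by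
    simpa [Subalgebra.mem_centralizer_iff] using htop.ge (Algebra.mem_top (x := v))
  simpa [mul_comm] using congrArg (· 1) hv

theorem exists_isometry_commute_normOneGroup_iff [Infinite F] [Module.Finite F E]
    (hchar : (2 : F) ≠ 0) (hK2 : Module.finrank F K = 2)
    (hKet : ∀ x : K, x ≠ 0 → ∃ y : K, Algebra.trace F K (x * y) ≠ 0)
    (conj : K →ₐ[F] K) (hconj : ∀ x, conj (conj x) = x)
    (hfix : ∀ x : K, conj x = x ↔ ∃ a : F, algebraMap F K a = x)
    (hEet : ∀ x : E, x ≠ 0 → ∃ y : E, Algebra.trace F E (x * y) ≠ 0) (μ ν : K ⊗[F] E) :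
    (∃ g : (K ⊗[F] E) ≃ₗ[K] (K ⊗[F] E),
        (∀ x y, hermFormOf conj ν (g x) (g y) = hermFormOf conj μ x y) ∧
        ∀ x : (K ⊗[F] E)ˣ, x ∈ normOneGroup (tensorConj conj) →
          g.toLinearMap ∘ₗ Algebra.lmul K (K ⊗[F] E) x
            = Algebra.lmul K (K ⊗[F] E) x ∘ₗ g.toLinearMap) ↔
      ∃ y : (K ⊗[F] E)ˣ, ν = μ * ((y : K ⊗[F] E) * tensorConj conj (y : K ⊗[F] E)) := by
  constructor
  · rintro ⟨g, hiso, hcomm⟩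
    have hg (x) : g x = g 1 * x := LinearMap.congr_fun
      (LinearMap.eq_lmul_of_commute_normOneGroup hchar hK2 hKet conj hconj hfix _ hcomm) x
    obtain ⟨y, hy⟩ : IsUnit (g 1) := by
      obtain ⟨v, hv⟩ := g.surjective 1
      exact IsUnit.of_mul_eq_one v (by rw [← hg, hv])
    have hνμ : ν * ((y : K ⊗[F] E) * tensorConj conj (y : K ⊗[F] E)) = μ :=
      eq_of_forall_hermFormOf_one_eq hEet conj fun x => by
        rw [← hermFormOf_mul_mul, mul_one, hy, ← hg, hiso]
    refine ⟨y⁻¹, ?_⟩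
    rw [← hνμ, mul_normMap_mul_normMap_inv]
  · rintro ⟨y, rfl⟩
    refine ⟨DistribMulAction.toLinearEquiv K (K ⊗[F] E) y⁻¹, fun a b => ?_, fun x _ => ?_⟩
    · simp only [DistribMulAction.toLinearEquiv_apply, Units.smul_def, smul_eq_mul,
        hermFormOf_mul_mul]
      rw [mul_normMap_mul_normMap_inv]
    · refine LinearMap.ext fun v => ?_
      simp [Units.smul_def, mul_left_comm]

end TensorConj

theorem stmt15_general (F K E V : Type) [Field F] [Infinite F] [CommRing K] [Algebra F K]
    [CommRing E] [Algebra F E] [AddCommGroup V] [Module K V]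
    (hchar : (2 : F) ≠ 0)
    (hK2 : Module.finrank F K = 2)
    (hKet : ∀ x : K, x ≠ 0 → ∃ y : K, Algebra.trace F K (x * y) ≠ 0)
    (conj : K →ₐ[F] K)
    (hconj : ∀ x, conj (conj x) = x)
    (hfix : ∀ x : K, conj x = x ↔ ∃ a : F, algebraMap F K a = x)
    [Module.Finite F E]
    (hEet : ∀ x : E, x ≠ 0 → ∃ y : E, Algebra.trace F E (x * y) ≠ 0)
    (B : V → V → K)
    (lam lam' : Eˣ)
    (r r' : (K ⊗[F] E) ≃ₗ[K] V)
    (hr : ∀ x y : K ⊗[F] E,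
      B (r x) (r y) = hermFormOf conj (Algebra.TensorProduct.includeRight (lam : E)) x y)
    (hr' : ∀ x y : K ⊗[F] E,
      B (r' x) (r' y) = hermFormOf conj (Algebra.TensorProduct.includeRight (lam' : E)) x y) :
    (∃ h : V ≃ₗ[K] V,
        (∀ u v : V, B (h u) (h v) = B u v) ∧
        ∀ x : (K ⊗[F] E)ˣ, x ∈ normOneGroup (tensorConj conj) →
          h.toLinearMap
              ∘ₗ (r.toLinearMap ∘ₗ (Algebra.lmul K (K ⊗[F] E) (x : K ⊗[F] E))
                    ∘ₗ r.symm.toLinearMap)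
              ∘ₗ h.symm.toLinearMap
            = r'.toLinearMap ∘ₗ (Algebra.lmul K (K ⊗[F] E) (x : K ⊗[F] E))
                ∘ₗ r'.symm.toLinearMap)
      ↔ ∃ y : (K ⊗[F] E)ˣ,
          Algebra.TensorProduct.includeRight (lam' : E)
            = Algebra.TensorProduct.includeRight (lam : E)
              * ((y : K ⊗[F] E) * tensorConj conj (y : K ⊗[F] E)) := by
  rw [LinearEquiv.exists_isometry_conj_iff B _ _ r r' hr hr' (· ∈ normOneGroup (tensorConj conj))
    fun x : (K ⊗[F] E)ˣ => Algebra.lmul K (K ⊗[F] E) x]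
  exact exists_isometry_commute_normOneGroup_iff hchar hK2 hKet conj hconj hfix hEet _ _

/-- Conjugacy of admissible embeddings detects norms: for
isometries `r : V_{E,λ} → V` and `r′ : V_{E,λ'} → V`, the admissible embeddings
`i(x) = r ∘ M_x ∘ r⁻¹` and `i′(x) = r′ ∘ M_x ∘ (r′)⁻¹` of `K_E¹` into `U(V)` are
conjugate by an element `h ∈ U(V)` if and only if `λ⁻¹λ' ∈ N_{K_E/E}(K_E×)`. -/
theorem stmt15 (F K E V : Type) [Field F] [Infinite F] [CommRing K] [Algebra F K]
    [CommRing E] [Algebra F E] [AddCommGroup V] [Module K V] (n : ℕ)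
    (hchar : (2 : F) ≠ 0)
    (hK2 : Module.finrank F K = 2)
    (hKet : ∀ x : K, x ≠ 0 → ∃ y : K, Algebra.trace F K (x * y) ≠ 0)
    (conj : K →ₐ[F] K)
    (hconj : ∀ x, conj (conj x) = x)
    (hfix : ∀ x : K, conj x = x ↔ ∃ a : F, algebraMap F K a = x)
    [Module.Finite F E] (hEn : Module.finrank F E = n)
    (hEet : ∀ x : E, x ≠ 0 → ∃ y : E, Algebra.trace F E (x * y) ≠ 0)
    (B : V → V → K)
    (hherm : ∀ x y, B x y = conj (B y x))
    (haddl : ∀ x x' y, B (x + x') y = B x y + B x' y)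
    (hsmull : ∀ (a : K) (x y : V), B (a • x) y = a * B x y)
    (hnd : ∀ x : V, x ≠ 0 → ∃ y, B x y ≠ 0)
    (lam lam' : Eˣ)
    (r r' : (K ⊗[F] E) ≃ₗ[K] V)
    (hr : ∀ x y : K ⊗[F] E,
      B (r x) (r y) = hermFormOf conj (Algebra.TensorProduct.includeRight (lam : E)) x y)
    (hr' : ∀ x y : K ⊗[F] E,
      B (r' x) (r' y) = hermFormOf conj (Algebra.TensorProduct.includeRight (lam' : E)) x y) :
    (∃ h : V ≃ₗ[K] V,
        (∀ u v : V, B (h u) (h v) = B u v) ∧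
        ∀ x : (K ⊗[F] E)ˣ, x ∈ normOneGroup (tensorConj conj) →
          h.toLinearMap
              ∘ₗ (r.toLinearMap ∘ₗ (Algebra.lmul K (K ⊗[F] E) (x : K ⊗[F] E))
                    ∘ₗ r.symm.toLinearMap)
              ∘ₗ h.symm.toLinearMap
            = r'.toLinearMap ∘ₗ (Algebra.lmul K (K ⊗[F] E) (x : K ⊗[F] E))
                ∘ₗ r'.symm.toLinearMap)
      ↔ ∃ y : (K ⊗[F] E)ˣ,
          Algebra.TensorProduct.includeRight (lam' : E)
            = Algebra.TensorProduct.includeRight (lam : E)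
              * ((y : K ⊗[F] E) * tensorConj conj (y : K ⊗[F] E)) :=
  stmt15_general F K E V hchar hK2 hKet conj hconj hfix hEet B lam lam' r r' hr hr'
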